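/- arXiv:2604.16324 — 3 statements merged into one kernel-verified Lean document; each statement's English description precedes it below -/
import Mathlib

section
/- Let B, R be positive integers, h : Fin B → Fin R any fixed function, and let (s b)_{b} be a family of mutually independent random variables on a probability space, each uniformly distributed on {−1, 1}. Define the random matrix S ∈ ℝ^{R×B} by S_{r,b} = s(b) if h(b) = r and S_{r,b} = 0 otherwise. Then the entrywise expectation of SᵀS equals the B×B identity matrix: E[(SᵀS)_{i,j}] = 1 if i = j and 0 if i ≠ j. -/
open MeasureTheory ProbabilityTheory Matrix

/-- The count-sketch matrix associated to a hash function `h : Fin B → Fin R` and a sign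
assignment `s : Fin B → ℝ`: the entry at `(r, b)` is `s b` if `h b = r` and `0` otherwise. -/
noncomputable def countSketch {B R : ℕ} (h : Fin B → Fin R) (s : Fin B → ℝ) :
    Matrix (Fin R) (Fin B) ℝ :=
  Matrix.of fun r b => if h b = r then s b else 0

/-!
Column `b` of a count sketch is `s b` times the basis vector `e_{h b}`, so `(SᵀS)_{ij}` is
`s i * s j` when `h i = h j` and `0` otherwise. On the diagonal `s i ^ 2 = 1`; off the diagonal
independence factors the expectation into `E[s i] * E[s j] = 0`.
-/

theorem countSketch_transpose_mul_self_apply {B R : ℕ} (h : Fin B → Fin R) (s : Fin B → ℝ)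
    (i j : Fin B) :
    ((countSketch h s)ᵀ * countSketch h s) i j = if h i = h j then s i * s j else 0 := by
  simp only [mul_apply, transpose_apply, countSketch, of_apply, ite_mul, zero_mul, mul_ite,
    mul_zero]
  rw [Finset.sum_eq_single (h i) (fun r _ hr => by simp [Ne.symm hr]) (by simp)]
  simp [eq_comm]

section Rademacher

variable {Ω : Type*} [MeasurableSpace Ω] {μ : Measure Ω} {f : Ω → ℝ}

theorem integral_eq_zero_of_sign_of_measure_eq_one_half [IsProbabilityMeasure μ]
    (hm : Measurable f) (hv : ∀ ω, f ω = 1 ∨ f ω = -1) (hu : μ {ω | f ω = 1} = 1 / 2) :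
    ∫ ω, f ω ∂μ = 0 := by
  set E := {ω | f ω = 1}
  have hE : MeasurableSet E := hm (measurableSet_singleton 1)
  have hf : f = fun ω => E.indicator (fun _ => (2 : ℝ)) ω - 1 := by
    funext ω
    rcases hv ω with h | h <;> norm_num [E, Set.indicator, h]
  rw [hf, integral_sub ((integrable_const 2).indicator hE) (integrable_const 1),
    integral_indicator_const _ hE, integral_const, measureReal_def, hu]
  norm_num [ENNReal.toReal_div]

theorem integral_mul_self_eq_one_of_sign [IsProbabilityMeasure μ]
    (hv : ∀ ω, f ω = 1 ∨ f ω = -1) : ∫ ω, f ω * f ω ∂μ = 1 := by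
  have hsq : ∀ ω, f ω * f ω = 1 := fun ω => by rcases hv ω with h | h <;> simp [h]
  simp [hsq]

end Rademacher

theorem countSketch_transpose_mul_self_expectation_eq_one_general
    (B R : ℕ) (h : Fin B → Fin R)
    {Ω : Type*} [MeasureSpace Ω] [IsProbabilityMeasure (ℙ : Measure Ω)]
    (s : Fin B → Ω → ℝ)
    (hmeas : ∀ b, Measurable (s b))
    (hval : ∀ b ω, s b ω = 1 ∨ s b ω = -1)
    (hunif : ∀ b, (ℙ : Measure Ω) {ω | s b ω = 1} = 1 / 2)
    (hindep : iIndepFun s ℙ)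
    (i j : Fin B) :
    ∫ ω, ((countSketch h (fun b => s b ω))ᵀ * countSketch h (fun b => s b ω)) i j ∂ℙ =
      if i = j then (1 : ℝ) else 0 := by
  simp_rw [countSketch_transpose_mul_self_apply]
  rcases eq_or_ne i j with rfl | hij
  · simpa using integral_mul_self_eq_one_of_sign (hval i)
  have hprod : ∫ ω, s i ω * s j ω ∂ℙ = 0 := by
    rw [(hindep.indepFun hij).integral_fun_mul_eq_mul_integral (hmeas i).aestronglyMeasurable
      (hmeas j).aestronglyMeasurable,
      integral_eq_zero_of_sign_of_measure_eq_one_half (hmeas i) (hval i) (hunif i), zero_mul]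
  split_ifs <;> simp [hprod]

/-- for a count-sketch matrix `S` built from a fixed hash `h` and a Rademacher
family of signs `s`, the entrywise expectation of `Sᵀ * S` is the identity matrix. -/
theorem countSketch_transpose_mul_self_expectation_eq_one
    (B R : ℕ) (hB : 0 < B) (hR : 0 < R) (h : Fin B → Fin R)
    {Ω : Type*} [MeasureSpace Ω] [IsProbabilityMeasure (ℙ : Measure Ω)]
    (s : Fin B → Ω → ℝ)
    (hmeas : ∀ b, Measurable (s b))
    (hval : ∀ b ω, s b ω = 1 ∨ s b ω = -1)
    (hunif : ∀ b, (ℙ : Measure Ω) {ω | s b ω = 1} = 1 / 2)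
    (hindep : iIndepFun s ℙ)
    (i j : Fin B) :
    ∫ ω, ((countSketch h (fun b => s b ω))ᵀ * countSketch h (fun b => s b ω)) i j ∂ℙ =
      if i = j then (1 : ℝ) else 0 :=
  countSketch_transpose_mul_self_expectation_eq_one_general B R h s hmeas hval hunif hindep i j
end

section
/- Let B, R be positive integers and n : Fin R → ℕ a bin-size profile with Σ_r n(r) = B such that every n(r) equals ⌊B/R⌋ or ⌈B/R⌉. Then the number of ordered colliding pairs satisfies Σ_r n(r)·(n(r) − 1) ≤ B·(B − 1)/R, i.e., R·Σ_r n(r)·(n(r) − 1) ≤ B·(B − 1). -/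
/-!
On the two admissible sizes `q` and `q + 1` the pair count `m * (m - 1)` is affine in `m`,
namely `2 * q * m - q * (q + 1)`, so `∑ n r * (n r - 1)` is determined by `B` and `R`.
Writing `B = R * q + k`, the slack `B * (B - 1) - R * ∑ n r * (n r - 1)` comes out as
`k * (k - 1) + R * (R - 1) * q ≥ 0`.
-/

open Finset

theorem Nat.ceilDiv_eq_div_or_eq_div_add_one (a b : ℕ) :
    a ⌈/⌉ b = a / b ∨ a ⌈/⌉ b = a / b + 1 := by
  rcases Nat.eq_zero_or_pos b with rfl | hb
  · simp
  have hle : a / b ≤ a ⌈/⌉ b := floorDiv_le_ceilDiv (a := b) (b := a)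
  have hge : a ⌈/⌉ b ≤ a / b + 1 := (ceilDiv_le_iff_le_mul hb).2 (Nat.lt_mul_div_succ a hb).le
  omega

theorem mul_pred_add_eq_of_eq_or_eq_add_one {m q : ℕ} (h : m = q ∨ m = q + 1) :
    m * (m - 1) + q * (q + 1) = 2 * q * m := by
  rcases h with rfl | rfl
  · cases m
    · rfl
    · simp only [Nat.add_sub_cancel]; ring
  · simp only [Nat.add_sub_cancel]; ring

theorem sum_mul_pred_add_card_mul_eq {ι : Type*} (s : Finset ι) (n : ι → ℕ) (q : ℕ)
    (h : ∀ i ∈ s, n i = q ∨ n i = q + 1) :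
    ∑ i ∈ s, n i * (n i - 1) + #s * (q * (q + 1)) = 2 * q * ∑ i ∈ s, n i := by
  rw [← smul_eq_mul, ← sum_const, ← sum_add_distrib, mul_sum]
  exact sum_congr rfl fun i hi => mul_pred_add_eq_of_eq_or_eq_add_one (h i hi)

theorem card_mul_sum_mul_pred_le {ι : Type*} (s : Finset ι) (n : ι → ℕ) (q : ℕ)
    (h : ∀ i ∈ s, n i = q ∨ n i = q + 1) :
    #s * ∑ i ∈ s, n i * (n i - 1) ≤ (∑ i ∈ s, n i) * (∑ i ∈ s, n i - 1) := by
  have hpairs := sum_mul_pred_add_card_mul_eq s n q h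
  obtain ⟨k, hk⟩ : ∃ k, ∑ i ∈ s, n i = #s * q + k :=
    Nat.exists_eq_add_of_le <| card_nsmul_le_sum s n q fun i hi => by
      rcases h i hi with h | h <;> omega
  rw [Nat.mul_sub_one]
  apply Nat.le_sub_of_add_le
  rw [hk] at hpairs ⊢
  nlinarith [Nat.le_mul_self k, Nat.mul_le_mul_right q (Nat.le_mul_self #s)]

theorem balanced_bins_collision_count_le_general
    (B R : ℕ)
    (n : Fin R → ℕ) (hsum : (∑ r, n r) = B)
    (hbal : ∀ r, n r = B / R ∨ n r = B ⌈/⌉ R) :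
    R * ∑ r, n r * (n r - 1) ≤ B * (B - 1) := by
  have hbins : ∀ r ∈ univ, n r = B / R ∨ n r = B / R + 1 := fun r _ => by
    have := Nat.ceilDiv_eq_div_or_eq_div_add_one B R
    grind
  simpa [hsum] using card_mul_sum_mul_pred_le univ n (B / R) hbins

/-- if the bin-size profile `n : Fin R → ℕ` sums to `B` and every bin size equals
`⌊B/R⌋` or `⌈B/R⌉`, then the number of ordered colliding pairs is at most `B·(B − 1)/R`,
i.e. `R · Σ_r n(r)·(n(r) − 1) ≤ B·(B − 1)`. -/
theorem balanced_bins_collision_count_le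
    (B R : ℕ) (hB : 0 < B) (hR : 0 < R)
    (n : Fin R → ℕ) (hsum : (∑ r, n r) = B)
    (hbal : ∀ r, n r = B / R ∨ n r = B ⌈/⌉ R) :
    R * ∑ r, n r * (n r - 1) ≤ B * (B - 1) :=
  balanced_bins_collision_count_le_general B R n hsum hbal
end

section
/- Let B ≥ 2 and let c : Fin B × Fin B → ℝ be a fixed array of coefficients with c(i, i) = 0 for all i. Let (s b)_b be a Rademacher family of mutually independent random variables each uniform on {−1, 1}. Then E[ ( Σ_{i,j} s(i)·s(j)·c(i,j) )² ] = Σ over ordered pairs (i, j) with i ≠ j of c(i,j)·( c(i,j) + c(j,i) ). -/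
/-!
Expanding the square gives `E[X²] = ∑_{p,q} c p * c q * E[s p.1 * s p.2 * s q.1 * s q.2]`, and the
diagonal pairs drop out since `c` vanishes there. By independence, the mean of a monomial
`∏ b, s b ^ n b` in Rademacher variables factors into the means of the powers, which are `1` for
even and `0` for odd exponents. For off-diagonal `p` and `q`, every index occurs an even number of
times in `(p.1, p.2, q.1, q.2)` exactly when `q = p` or `q = p.swap`.
-/

open MeasureTheory ProbabilityTheory Finset

lemma pow_eq_ite_even_of_sign {R : Type*} [Monoid R] [HasDistribNeg R] {x : R}
    (hx : x = 1 ∨ x = -1) (n : ℕ) : x ^ n = if Even n then 1 else x := by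
  rcases hx with rfl | rfl <;> rcases Nat.even_or_odd n with hn | hn <;>
    simp [hn, hn.neg_one_pow, Nat.not_even_iff_odd]

lemma mul_mul_mul_eq_prod_pow {ι M : Type*} [Fintype ι] [DecidableEq ι] [CommMonoid M]
    (x : ι → M) (i j k l : ι) :
    x i * x j * (x k * x l) =
      ∏ b, x b ^ ((if i = b then 1 else 0) + (if j = b then 1 else 0) +
        (if k = b then 1 else 0) + (if l = b then 1 else 0)) := by
  simp only [pow_add, prod_mul_distrib, pow_ite, pow_one, pow_zero, prod_ite_eq, mem_univ,
    if_true, mul_assoc]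

lemma forall_even_multiplicity_iff {ι : Type*} [DecidableEq ι] {i j k l : ι} (hij : i ≠ j) :
    (∀ b, Even ((if i = b then 1 else 0) + (if j = b then 1 else 0) +
        (if k = b then 1 else 0) + (if l = b then 1 else 0))) ↔
      (k = i ∧ l = j) ∨ (k = j ∧ l = i) := by
  constructor
  · intro h
    have := h i
    have := h j
    grind
  · rintro (⟨rfl, rfl⟩ | ⟨rfl, rfl⟩) b <;> grind

lemma integral_sq_sum_mul {Ω κ : Type*} [MeasurableSpace Ω] {μ : Measure Ω} [Fintype κ]
    (Y : κ → Ω → ℝ) (a : κ → ℝ) (hY : ∀ p q, Integrable (fun ω => Y p ω * Y q ω) μ) :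
    ∫ ω, (∑ p, Y p ω * a p) ^ 2 ∂μ = ∑ p, ∑ q, a p * a q * ∫ ω, Y p ω * Y q ω ∂μ := by
  have hexpand : ∀ ω, (∑ p, Y p ω * a p) ^ 2 = ∑ p, ∑ q, a p * a q * (Y p ω * Y q ω) := by
    intro ω
    rw [sq, sum_mul_sum]
    exact sum_congr rfl fun p _ => sum_congr rfl fun q _ => by ring
  simp_rw [hexpand]
  rw [integral_finsetSum _ fun p _ => integrable_finsetSum _ fun q _ => (hY p q).const_mul _]
  refine sum_congr rfl fun p _ => ?_
  rw [integral_finsetSum _ fun q _ => (hY p q).const_mul _]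
  simp_rw [integral_const_mul]

structure IsRademacher {Ω : Type*} [MeasurableSpace Ω] (X : Ω → ℝ) (μ : Measure Ω) : Prop where
  measurable : Measurable X
  sign : ∀ ω, X ω = 1 ∨ X ω = -1
  measure_eq_one : μ {ω | X ω = 1} = 1 / 2

namespace IsRademacher

variable {Ω : Type*} [MeasurableSpace Ω] {μ : Measure Ω} [IsProbabilityMeasure μ] {X : Ω → ℝ}

lemma integral_eq_zero (hX : IsRademacher X μ) : ∫ ω, X ω ∂μ = 0 := by
  have hA : MeasurableSet {ω | X ω = 1} := hX.measurable (measurableSet_singleton 1)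
  have hX_eq : X = fun ω => 2 * {ω | X ω = 1}.indicator (fun _ => (1 : ℝ)) ω - 1 := by
    funext ω
    rcases hX.sign ω with h | h <;> simp [Set.indicator, h] <;> norm_num
  rw [hX_eq, integral_sub (((integrable_const 1).indicator hA).const_mul 2) (integrable_const 1),
    integral_const_mul, integral_indicator_const _ hA, measureReal_def, hX.measure_eq_one]
  norm_num

lemma integral_pow (hX : IsRademacher X μ) (n : ℕ) :
    ∫ ω, X ω ^ n ∂μ = if Even n then 1 else 0 := by
  simp_rw [pow_eq_ite_even_of_sign (hX.sign _) n]
  split_ifs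
  · simp
  · exact hX.integral_eq_zero

end IsRademacher

section RademacherFamily

variable {Ω ι : Type*} [MeasurableSpace Ω] {μ : Measure Ω} {s : ι → Ω → ℝ}

lemma integrable_mul_mul_mul_of_sign [IsFiniteMeasure μ] (hmeas : ∀ b, Measurable (s b))
    (hval : ∀ b ω, s b ω = 1 ∨ s b ω = -1) (i j k l : ι) :
    Integrable (fun ω => s i ω * s j ω * (s k ω * s l ω)) μ := by
  have hnorm : ∀ b ω, ‖s b ω‖ = 1 := fun b ω => by rcases hval b ω with h | h <;> simp [h]
  refine Integrable.of_bound (by fun_prop) 1 (ae_of_all _ fun ω => ?_)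
  simp [hnorm]

variable [IsProbabilityMeasure μ]

lemma integral_prod_pow_of_iIndepFun [Fintype ι] (hs : ∀ b, IsRademacher (s b) μ)
    (hindep : iIndepFun s μ) (n : ι → ℕ) :
    ∫ ω, ∏ b, s b ω ^ n b ∂μ = if ∀ b, Even (n b) then 1 else 0 := by
  rw [hindep.integral_fun_prod_comp (f := fun b x => x ^ n b)
    (fun b => (hs b).measurable.aemeasurable) fun b => (continuous_pow (n b)).aestronglyMeasurable]
  simp only [fun b => (hs b).integral_pow, prod_boole, mem_univ, true_imp_iff]

lemma integral_mul_mul_mul_of_ne [Fintype ι] [DecidableEq ι] (hs : ∀ b, IsRademacher (s b) μ)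
    (hindep : iIndepFun s μ) {i j : ι} (hij : i ≠ j) (k l : ι) :
    ∫ ω, s i ω * s j ω * (s k ω * s l ω) ∂μ =
      (if k = i ∧ l = j then 1 else 0) + (if k = j ∧ l = i then 1 else 0) := by
  rw [funext fun ω => mul_mul_mul_eq_prod_pow (s · ω) i j k l,
    integral_prod_pow_of_iIndepFun hs hindep]
  simp only [forall_even_multiplicity_iff hij]
  grind

end RademacherFamily

theorem rademacher_chaos_second_moment_general
    (B : ℕ)
    (c : Fin B × Fin B → ℝ) (hdiag : ∀ i : Fin B, c (i, i) = 0)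
    {Ω : Type*} [MeasureSpace Ω] [IsProbabilityMeasure (ℙ : Measure Ω)]
    (s : Fin B → Ω → ℝ)
    (hmeas : ∀ b, Measurable (s b))
    (hval : ∀ b ω, s b ω = 1 ∨ s b ω = -1)
    (hunif : ∀ b, (ℙ : Measure Ω) {ω | s b ω = 1} = 1 / 2)
    (hindep : iIndepFun s ℙ) :
    ∫ ω, (∑ i : Fin B, ∑ j : Fin B, s i ω * s j ω * c (i, j)) ^ 2 ∂ℙ =
      ∑ i : Fin B, ∑ j : Fin B,
        (if i ≠ j then c (i, j) * (c (i, j) + c (j, i)) else 0) := by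
  have hs : ∀ b, IsRademacher (s b) ℙ := fun b => ⟨hmeas b, hval b, hunif b⟩
  have hc : ∀ p : Fin B × Fin B, p.1 = p.2 → c p = 0 :=
    fun ⟨i, j⟩ h => (show i = j from h) ▸ hdiag i
  have hmoment : ∀ p q : Fin B × Fin B,
      c p * c q * ∫ ω, s p.1 ω * s p.2 ω * (s q.1 ω * s q.2 ω) ∂ℙ =
        c p * ((if q = p then c q else 0) + (if q = p.swap then c q else 0)) := by
    intro p q
    by_cases hp : p.1 = p.2
    · simp [hc p hp]
    by_cases hq : q.1 = q.2
    · simp [hc q hq, hq]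
    rw [integral_mul_mul_mul_of_ne hs hindep hp]
    simp only [Prod.ext_iff, Prod.fst_swap, Prod.snd_swap]
    split_ifs <;> ring
  calc ∫ ω, (∑ i, ∑ j, s i ω * s j ω * c (i, j)) ^ 2 ∂ℙ
      = ∫ ω, (∑ p : Fin B × Fin B, s p.1 ω * s p.2 ω * c p) ^ 2 ∂ℙ := by
        simp only [← Fintype.sum_prod_type']
    _ = ∑ p : Fin B × Fin B, c p * (c p + c p.swap) := by
        rw [integral_sq_sum_mul _ _ fun p q => integrable_mul_mul_mul_of_sign hmeas hval _ _ _ _]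
        simp only [hmoment, ← mul_sum, sum_add_distrib, Fintype.sum_ite_eq']
    _ = ∑ i, ∑ j, if i ≠ j then c (i, j) * (c (i, j) + c (j, i)) else 0 := by
        rw [← Fintype.sum_prod_type']
        refine sum_congr rfl fun p _ => ?_
        split_ifs with hp
        · rfl
        · simp [hc p (not_not.mp hp)]

/-- second-moment identity for the off-diagonal Rademacher chaos. If
`c : Fin B × Fin B → ℝ` vanishes on the diagonal and `(s b)_b` is a Rademacher family, then
`E[(Σ_{i,j} s(i)·s(j)·c(i,j))²] = Σ_{i ≠ j} c(i,j)·(c(i,j) + c(j,i))`. -/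
theorem rademacher_chaos_second_moment
    (B : ℕ) (hB : 2 ≤ B)
    (c : Fin B × Fin B → ℝ) (hdiag : ∀ i : Fin B, c (i, i) = 0)
    {Ω : Type*} [MeasureSpace Ω] [IsProbabilityMeasure (ℙ : Measure Ω)]
    (s : Fin B → Ω → ℝ)
    (hmeas : ∀ b, Measurable (s b))
    (hval : ∀ b ω, s b ω = 1 ∨ s b ω = -1)
    (hunif : ∀ b, (ℙ : Measure Ω) {ω | s b ω = 1} = 1 / 2)
    (hindep : iIndepFun s ℙ) :
    ∫ ω, (∑ i : Fin B, ∑ j : Fin B, s i ω * s j ω * c (i, j)) ^ 2 ∂ℙ =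
      ∑ i : Fin B, ∑ j : Fin B,
        (if i ≠ j then c (i, j) * (c (i, j) + c (j, i)) else 0) :=
  rademacher_chaos_second_moment_general B c hdiag s hmeas hval hunif hindep
end
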